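/- Let R ≅ F_1 × ··· × F_n, where each F_i is a field and n ≥ 3. Then the boundary of the co-maximal ideal graph satisfies ∂(Γ(R)) = V(Γ(R)) \ Max(R). -/

import Mathlib

/-! Common definitions: metric/strong-metric dimension, strong resolving graph,
independence number, and the co-maximal ideal graph of a commutative ring. -/

namespace CoMax

variable {V : Type*}

/-- `S` is a resolving set for `G`: the metric representations with respect to `S`
of vertices outside `S` are pairwise distinct. -/
def IsResolvingSet (G : SimpleGraph V) (S : Set V) : Prop :=
  ∀ u v : V, u ∉ S → v ∉ S → (∀ w ∈ S, G.dist u w = G.dist v w) → u = v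

/-- The metric dimension of `G`: the smallest cardinality of a resolving set. -/
noncomputable def metricDim (G : SimpleGraph V) : Cardinal :=
  ⨅ S : {S : Set V // IsResolvingSet G S}, Cardinal.mk ↥(S.1)

/-- `w` strongly resolves `u` and `v`: there is a shortest path from `u` to `w`
containing `v`, or a shortest path from `v` to `w` containing `u`. -/
def StronglyResolves (G : SimpleGraph V) (w u v : V) : Prop :=
  G.dist u v + G.dist v w = G.dist u w ∨ G.dist v u + G.dist u w = G.dist v w

/-- `S` is a strong resolving set for `G`: every pair of distinct vertices is
strongly resolved by some vertex of `S`. -/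
def IsStrongResolvingSet (G : SimpleGraph V) (S : Set V) : Prop :=
  ∀ u v : V, u ≠ v → ∃ w ∈ S, StronglyResolves G w u v

/-- The strong metric dimension of `G`: the smallest cardinality of a strong
resolving set. -/
noncomputable def sdim (G : SimpleGraph V) : Cardinal :=
  ⨅ S : {S : Set V // IsStrongResolvingSet G S}, Cardinal.mk ↥(S.1)

/-- `u` is maximally distant from `v`: `d(v,w) ≤ d(u,v)` for every neighbor `w` of `u`. -/
def MaximallyDistantFrom (G : SimpleGraph V) (u v : V) : Prop :=
  ∀ w : V, G.Adj u w → G.dist v w ≤ G.dist u v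

/-- `u` and `v` are mutually maximally distant. -/
def MutuallyMaximallyDistant (G : SimpleGraph V) (u v : V) : Prop :=
  MaximallyDistantFrom G u v ∧ MaximallyDistantFrom G v u

/-- The boundary `∂(G)` of `G`. -/
def boundarySet (G : SimpleGraph V) : Set V :=
  {u | ∃ v, v ≠ u ∧ MutuallyMaximallyDistant G u v}

/-- The strong resolving graph `G_SR` of `G`: vertices are the boundary vertices,
two of them being adjacent iff they are mutually maximally distant. -/
def srGraph (G : SimpleGraph V) : SimpleGraph ↥(boundarySet G) where
  Adj u v := u ≠ v ∧ MutuallyMaximallyDistant G u.1 v.1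
  symm := ⟨fun u v h => ⟨h.1.symm, h.2.2, h.2.1⟩⟩
  loopless := ⟨fun u h => h.1 rfl⟩

/-- The independence number `β(G)` of `G`. -/
noncomputable def indepNum (G : SimpleGraph V) : ℕ :=
  sSup {k | ∃ S : Set V,
    (∀ u ∈ S, ∀ v ∈ S, u ≠ v → ¬ G.Adj u v) ∧ S.Finite ∧ S.ncard = k}

/-- The vertices of the co-maximal ideal graph of `R`: proper ideals of `R`
not contained in the Jacobson radical of `R`. -/
def IsComaxVertex (R : Type*) [CommRing R] (I : Ideal R) : Prop :=
  I ≠ ⊤ ∧ ¬ I ≤ Ideal.jacobson (⊥ : Ideal R)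

/-- The co-maximal ideal graph `Γ(R)`: distinct vertices `I`, `J` are adjacent
iff `I + J = R`. -/
def comaxGraph (R : Type*) [CommRing R] :
    SimpleGraph {I : Ideal R // IsComaxVertex R I} where
  Adj I J := I ≠ J ∧ I.1 ⊔ J.1 = ⊤
  symm := ⟨fun I J h => ⟨h.1.symm, by rw [sup_comm]; exact h.2⟩⟩
  loopless := ⟨fun I h => h.1 rfl⟩

/-- The graph `Γ(R)**`: same vertices as `Γ(R)`, with distinct `I`, `J` adjacent
iff `I + J ≠ R`, `I ⊄ J` and `J ⊄ I`. -/
def comaxDoubleStar (R : Type*) [CommRing R] :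
    SimpleGraph {I : Ideal R // IsComaxVertex R I} where
  Adj I J := I ≠ J ∧ I.1 ⊔ J.1 ≠ ⊤ ∧ ¬ I.1 ≤ J.1 ∧ ¬ J.1 ≤ I.1
  symm := ⟨fun I J h => ⟨h.1.symm, by rw [sup_comm]; exact h.2.1, h.2.2.2, h.2.2.1⟩⟩
  loopless := ⟨fun I h => h.1 rfl⟩

/-- The ideal of a product ring `Π i, R i` whose members are the elements all of
whose components lie in the given family of ideals. -/
def piIdeal {ι : Type*} {R : ι → Type*} [∀ i, CommRing (R i)]
    (I : ∀ i, Ideal (R i)) : Ideal (∀ i, R i) where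
  carrier := {x | ∀ i, x i ∈ I i}
  add_mem' := fun ha hb i => add_mem (ha i) (hb i)
  zero_mem' := fun i => zero_mem _
  smul_mem' := fun c x hx i => (I i).smul_mem (c i) (hx i)

/-- The `i`-th component of an ideal of a product ring. -/
def comp {ι : Type*} {R : ι → Type*} [∀ i, CommRing (R i)]
    (K : Ideal (∀ i, R i)) (i : ι) : Ideal (R i) :=
  K.map (Pi.evalRingHom R i)

/-- The relation `I ∼ J`: for each `i`, the `i`-th component of `I` consists of
nilpotents iff the `i`-th component of `J` does. `[I] = [J]` iff `I ∼ J`. -/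
def simRel {ι : Type*} {R : ι → Type*} [∀ i, CommRing (R i)]
    (I J : Ideal (∀ i, R i)) : Prop :=
  ∀ i, comp I i ≤ nilradical (R i) ↔ comp J i ≤ nilradical (R i)

open Classical in
/-- The ideal `I′` obtained from `I` by replacing all of its nilpotent components by `0`. -/
noncomputable def primed {ι : Type*} {R : ι → Type*} [∀ i, CommRing (R i)]
    (K : Ideal (∀ i, R i)) : Ideal (∀ i, R i) :=
  piIdeal fun i => if comp K i ≤ nilradical (R i) then ⊥ else comp K i



/-! ### Auxiliary lemmas -/

section GraphAux

variable {W : Type*} {G : SimpleGraph W} {u v : W}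

lemma two_le_dist_aux (hne : u ≠ v) (hadj : ¬ G.Adj u v) (hr : G.Reachable u v) :
    2 ≤ G.dist u v := by
  have h0 : G.dist u v ≠ 0 := by
    rw [SimpleGraph.dist_ne_zero_iff_ne_and_reachable]; exact ⟨hne, hr⟩
  have h1 : G.dist u v ≠ 1 := fun h => hadj (SimpleGraph.dist_eq_one_iff_adj.mp h)
  omega

lemma three_le_dist_aux (hne : u ≠ v) (hadj : ¬ G.Adj u v)
    (hcn : ∀ w, G.Adj u w → ¬ G.Adj w v) (hr : G.Reachable u v) :
    3 ≤ G.dist u v := by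
  have h2 := two_le_dist_aux hne hadj hr
  rcases eq_or_lt_of_le h2 with h | h
  · exfalso
    obtain ⟨p, hp⟩ := hr.exists_walk_length_eq_dist
    rw [← h] at hp
    cases p with
    | nil => simp at hp
    | cons h1 q =>
      cases q with
      | nil => simp at hp
      | cons h2' q' =>
        cases q' with
        | nil => exact hcn _ h1 h2'
        | cons h3 q'' => simp [SimpleGraph.Walk.length_cons] at hp
  · omega

end GraphAux

section Fields

variable {n : ℕ} {F : Fin n → Type*} [∀ i, Field (F i)]

lemma mem_piIdeal {ι : Type*} {Rr : ι → Type*} [∀ i, CommRing (Rr i)]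
    (I : ∀ i, Ideal (Rr i)) (x : ∀ i, Rr i) :
    x ∈ piIdeal I ↔ ∀ i, x i ∈ I i := Iff.rfl

lemma comp_piIdeal (I : ∀ i, Ideal (F i)) (i : Fin n) : comp (piIdeal I) i = I i := by
  apply le_antisymm
  · rw [comp, Ideal.map_le_iff_le_comap]
    intro x hx
    exact hx i
  · intro y hy
    have hmem : (Pi.single i y : ∀ j, F j) ∈ piIdeal I := by
      intro j
      rcases eq_or_ne j i with rfl | h
      · simpa using hy
      · simp [Pi.single_eq_of_ne h]
    have := Ideal.mem_map_of_mem (Pi.evalRingHom F i) hmem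
    simp at this; exact this

lemma eq_piIdeal_comp (K : Ideal (∀ i, F i)) : K = piIdeal (comp K) := by
  apply le_antisymm
  · intro x hx
    rw [mem_piIdeal]
    intro i
    exact Ideal.mem_map_of_mem _ hx
  · intro x hx
    have hsurj : ∀ i : Fin n, Function.Surjective (Pi.evalRingHom F i) := by
      intro i z
      exact ⟨Pi.single i z, by simp⟩
    choose y hyK hyx using fun i =>
      (Ideal.mem_map_iff_of_surjective _ (hsurj i)).mp (hx i)
    have hx_eq : x = ∑ i : Fin n, Pi.single i (1 : F i) * y i := by
      funext j
      rw [Finset.sum_apply, Finset.sum_eq_single j]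
      · simp only [Pi.mul_apply, Pi.single_eq_same, one_mul]
        exact (hyx j).symm
      · intro b _ hbj
        simp [Pi.single_eq_of_ne hbj.symm]
      · simp
    rw [hx_eq]
    exact Ideal.sum_mem _ fun i _ => Ideal.mul_mem_left _ _ (hyK i)

/-- The support of an ideal of a product of fields. -/
def supp (K : Ideal (∀ i, F i)) : Set (Fin n) := {i | comp K i = ⊤}

lemma comp_of_mem_supp {K : Ideal (∀ i, F i)} {i : Fin n} (h : i ∈ supp K) :
    comp K i = ⊤ := h

lemma comp_of_not_mem_supp {K : Ideal (∀ i, F i)} {i : Fin n} (h : i ∉ supp K) :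
    comp K i = ⊥ := (Ideal.eq_bot_or_top _).resolve_right h

lemma le_iff_supp (K L : Ideal (∀ i, F i)) : K ≤ L ↔ supp K ⊆ supp L := by
  constructor
  · intro h i hi
    have hmap : comp K i ≤ comp L i := Ideal.map_mono h
    have : (⊤ : Ideal (F i)) ≤ comp L i := comp_of_mem_supp hi ▸ hmap
    exact top_le_iff.mp this
  · intro h x hx
    rw [eq_piIdeal_comp L, mem_piIdeal]
    intro i
    by_cases hi : i ∈ supp L
    · rw [comp_of_mem_supp hi]; trivial
    · have hKi : i ∉ supp K := fun hK => hi (h hK)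
      have hx' : x i ∈ comp K i := Ideal.mem_map_of_mem _ hx
      rw [comp_of_not_mem_supp hKi] at hx'
      rw [comp_of_not_mem_supp hi]
      exact hx'

lemma eq_iff_supp (K L : Ideal (∀ i, F i)) : K = L ↔ supp K = supp L := by
  constructor
  · rintro rfl; rfl
  · intro h
    exact le_antisymm ((le_iff_supp _ _).mpr h.le) ((le_iff_supp _ _).mpr h.ge)

lemma supp_sup (K L : Ideal (∀ i, F i)) : supp (K ⊔ L) = supp K ∪ supp L := by
  ext i
  simp only [supp, Set.mem_setOf_eq, Set.mem_union]
  rw [show comp (K ⊔ L) i = comp K i ⊔ comp L i from Ideal.map_sup _ _ _]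
  constructor
  · intro h
    rcases Ideal.eq_bot_or_top (comp K i) with hk | hk
    · right
      rw [hk, bot_sup_eq] at h
      exact h
    · left; exact hk
  · rintro (h | h) <;> rw [h] <;> simp

lemma supp_top : supp (⊤ : Ideal (∀ i, F i)) = Set.univ := by
  ext i
  simp only [supp, Set.mem_setOf_eq, Set.mem_univ, iff_true]
  rw [Ideal.eq_top_iff_one]
  exact Ideal.mem_map_of_mem (Pi.evalRingHom F i) (Submodule.mem_top : (1 : ∀ j, F j) ∈ ⊤)

lemma supp_bot : supp (⊥ : Ideal (∀ i, F i)) = ∅ := by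
  ext i
  simp only [supp, Set.mem_setOf_eq, Set.mem_empty_iff_false, iff_false]
  rw [show comp (⊥ : Ideal (∀ i, F i)) i = ⊥ from Ideal.map_bot (f := Pi.evalRingHom F i)]
  exact bot_ne_top

lemma eq_top_iff_supp (K : Ideal (∀ i, F i)) : K = ⊤ ↔ supp K = Set.univ := by
  rw [eq_iff_supp, supp_top]

lemma eq_bot_iff_supp (K : Ideal (∀ i, F i)) : K = ⊥ ↔ supp K = ∅ := by
  rw [eq_iff_supp, supp_bot]

open Classical in
/-- The ideal with a given support. -/
noncomputable def sIdl (s : Set (Fin n)) : Ideal (∀ i, F i) :=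
  piIdeal fun i => if i ∈ s then ⊤ else ⊥

lemma supp_sIdl (s : Set (Fin n)) : supp (sIdl (F := F) s) = s := by
  classical
  ext i
  simp only [supp, Set.mem_setOf_eq, sIdl, comp_piIdeal]
  split_ifs with h
  · simp [h]
  · exact iff_of_false bot_ne_top h

lemma jac_bot : Ideal.jacobson (⊥ : Ideal (∀ i, F i)) = ⊥ := by
  refine le_antisymm ?_ bot_le
  intro x hx
  rw [Ideal.mem_jacobson_bot] at hx
  rw [Ideal.mem_bot]
  funext i
  show x i = 0
  by_contra hxi
  have hu : IsUnit ((x * Pi.single i (-(x i)⁻¹) + 1) i) :=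
    (hx (Pi.single i (-(x i)⁻¹))).map (Pi.evalRingHom F i)
  have h0 : (x * Pi.single i (-(x i)⁻¹) + 1) i = 0 := by
    have hmul : x i * (-(x i)⁻¹) = -1 := by
      rw [mul_neg, mul_inv_cancel₀ hxi]
    simp only [Pi.add_apply, Pi.mul_apply, Pi.one_apply, Pi.single_eq_same, hmul]
    ring
  rw [h0] at hu
  exact not_isUnit_zero hu

lemma vertex_iff (I : Ideal (∀ i, F i)) :
    IsComaxVertex (∀ i, F i) I ↔ supp I ≠ Set.univ ∧ supp I ≠ ∅ := by
  unfold IsComaxVertex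
  rw [jac_bot, le_bot_iff]
  rw [Ne, eq_top_iff_supp, Ne, eq_bot_iff_supp]

lemma isMax_of_supp {I : Ideal (∀ i, F i)} {i : Fin n} (h : supp I = {i}ᶜ) :
    I.IsMaximal := by
  rw [Ideal.isMaximal_def]
  constructor
  · intro htop
    rw [htop, supp_top] at h
    have : i ∈ ({i}ᶜ : Set (Fin n)) := h ▸ Set.mem_univ i
    simp at this
  · intro J hJ
    have h1 : supp I ⊆ supp J := (le_iff_supp _ _).mp hJ.le
    have h2 : supp I ≠ supp J := fun he => hJ.ne ((eq_iff_supp _ _).mpr he)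
    rw [eq_top_iff_supp]
    rw [h] at h1 h2
    have hi : i ∈ supp J := by
      by_contra hi
      apply h2
      apply Set.Subset.antisymm h1
      intro k hk
      simp only [Set.mem_compl_iff, Set.mem_singleton_iff]
      rintro rfl
      exact hi hk
    rw [Set.eq_univ_iff_forall]
    intro k
    by_cases hk : k = i
    · exact hk ▸ hi
    · exact h1 (by simpa using hk)

lemma supp_of_isMax {I : Ideal (∀ i, F i)} (hm : I.IsMaximal) :
    ∃ i, supp I = {i}ᶜ := by
  have h1 : supp I ≠ Set.univ := fun h => hm.ne_top ((eq_top_iff_supp I).mpr h)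
  obtain ⟨i, hi⟩ := (Set.ne_univ_iff_exists_notMem _).mp h1
  refine ⟨i, ?_⟩
  ext k
  simp only [Set.mem_compl_iff, Set.mem_singleton_iff]
  constructor
  · rintro hk rfl; exact hi hk
  · intro hki
    by_contra hk
    have hle : I ≤ sIdl (supp I ∪ {k}) := by
      rw [le_iff_supp, supp_sIdl]
      exact Set.subset_union_left
    have hne' : I ≠ sIdl (supp I ∪ {k}) := by
      intro he
      have hs := (eq_iff_supp _ _).mp he
      rw [supp_sIdl] at hs
      exact hk (hs ▸ Set.mem_union_right _ rfl)
    have hlt : I < sIdl (supp I ∪ {k}) := lt_of_le_of_ne hle hne'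
    have htop := (Ideal.isMaximal_def.mp hm).2 _ hlt
    rw [eq_top_iff_supp, supp_sIdl] at htop
    have : i ∈ supp I ∪ {k} := htop ▸ Set.mem_univ i
    rcases this with h | h
    · exact hi h
    · exact hki (Set.mem_singleton_iff.mp h).symm

lemma not_isMax_missing_two {I : Ideal (∀ i, F i)} (hIt : supp I ≠ Set.univ)
    (hnm : ¬ I.IsMaximal) : ∃ i j, i ≠ j ∧ i ∉ supp I ∧ j ∉ supp I := by
  obtain ⟨i, hi⟩ := (Set.ne_univ_iff_exists_notMem _).mp hIt
  by_contra h
  push_neg at h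
  apply hnm
  apply isMax_of_supp (i := i)
  ext k
  simp only [Set.mem_compl_iff, Set.mem_singleton_iff]
  constructor
  · rintro hk rfl; exact hi hk
  · intro hk
    by_contra hks
    exact hks (h i k (fun he => hk he.symm) hi)

end Fields

section Main

variable {n : ℕ} {F : Fin n → Type*} [∀ i, Field (F i)]

/-- Construct a vertex of the co-maximal ideal graph from a support set. -/
noncomputable def vtx (s : Set (Fin n)) (h1 : s ≠ Set.univ) (h2 : s ≠ ∅) :
    {I : Ideal (∀ i, F i) // IsComaxVertex (∀ i, F i) I} :=
  ⟨sIdl s, by rw [vertex_iff, supp_sIdl]; exact ⟨h1, h2⟩⟩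

lemma supp_vtx (s : Set (Fin n)) (h1 : s ≠ Set.univ) (h2 : s ≠ ∅) :
    supp (vtx (F := F) s h1 h2).1 = s := supp_sIdl s

lemma adj_iff (u v : {I : Ideal (∀ i, F i) // IsComaxVertex (∀ i, F i) I}) :
    (comaxGraph (∀ i, F i)).Adj u v ↔
      supp u.1 ≠ supp v.1 ∧ supp u.1 ∪ supp v.1 = Set.univ := by
  show (u ≠ v ∧ u.1 ⊔ v.1 = ⊤) ↔ _
  rw [eq_top_iff_supp, supp_sup]
  constructor
  · rintro ⟨hne, hsup⟩
    refine ⟨?_, hsup⟩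
    intro he
    exact hne (Subtype.ext ((eq_iff_supp _ _).mpr he))
  · rintro ⟨hne, hsup⟩
    refine ⟨?_, hsup⟩
    intro he
    exact hne (by rw [he])

lemma vertex_supp_ne (u : {I : Ideal (∀ i, F i) // IsComaxVertex (∀ i, F i) I}) :
    supp u.1 ≠ Set.univ ∧ supp u.1 ≠ ∅ := (vertex_iff u.1).mp u.2

lemma ne_compl_self {s : Set (Fin n)} (h : s ≠ ∅) : s ≠ sᶜ := by
  intro he
  obtain ⟨x, hx⟩ := Set.nonempty_iff_ne_empty.mpr h
  exact (he ▸ hx : x ∈ sᶜ) hx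

lemma ne_of_supp_ne {u v : {I : Ideal (∀ i, F i) // IsComaxVertex (∀ i, F i) I}}
    (h : supp u.1 ≠ supp v.1) : u ≠ v :=
  fun he => h (by rw [he])

lemma supp_ne_of_ne {u v : {I : Ideal (∀ i, F i) // IsComaxVertex (∀ i, F i) I}}
    (h : u ≠ v) : supp u.1 ≠ supp v.1 :=
  fun he => h (Subtype.ext ((eq_iff_supp _ _).mpr he))

lemma exists_walk_le_three (u v : {I : Ideal (∀ i, F i) // IsComaxVertex (∀ i, F i) I}) :
    ∃ p : (comaxGraph (∀ i, F i)).Walk u v, p.length ≤ 3 := by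
  obtain ⟨hu1, hu2⟩ := vertex_supp_ne u
  obtain ⟨hv1, hv2⟩ := vertex_supp_ne v
  rcases eq_or_ne u v with rfl | hne
  · exact ⟨.nil, by simp⟩
  have hsne : supp u.1 ≠ supp v.1 := supp_ne_of_ne hne
  by_cases hun : supp u.1 ∪ supp v.1 = Set.univ
  · exact ⟨.cons ((adj_iff u v).mpr ⟨hsne, hun⟩) .nil, by simp⟩
  by_cases hint : supp u.1 ∩ supp v.1 = ∅
  · -- length-3 path through the complements
    have ha1 : (supp u.1)ᶜ ≠ Set.univ := fun h => hu2 (Set.compl_univ_iff.mp h)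
    have ha2 : (supp u.1)ᶜ ≠ ∅ := fun h => hu1 (Set.compl_empty_iff.mp h)
    have hb1 : (supp v.1)ᶜ ≠ Set.univ := fun h => hv2 (Set.compl_univ_iff.mp h)
    have hb2 : (supp v.1)ᶜ ≠ ∅ := fun h => hv1 (Set.compl_empty_iff.mp h)
    set w1 := vtx (F := F) (supp u.1)ᶜ ha1 ha2 with hw1
    set w2 := vtx (F := F) (supp v.1)ᶜ hb1 hb2 with hw2
    have hadj1 : (comaxGraph (∀ i, F i)).Adj u w1 := by
      rw [adj_iff, supp_vtx]
      exact ⟨ne_compl_self hu2, Set.union_compl_self _⟩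
    have hadj2 : (comaxGraph (∀ i, F i)).Adj w1 w2 := by
      rw [adj_iff, supp_vtx, supp_vtx]
      constructor
      · intro h
        exact hsne (compl_injective h)
      · rw [← Set.compl_inter, hint, Set.compl_empty]
    have hadj3 : (comaxGraph (∀ i, F i)).Adj w2 v := by
      rw [adj_iff, supp_vtx]
      exact ⟨(ne_compl_self hv2).symm, Set.compl_union_self _⟩
    exact ⟨.cons hadj1 (.cons hadj2 (.cons hadj3 .nil)), by simp⟩
  · -- common neighbor
    have hiw1 : (supp u.1 ∩ supp v.1)ᶜ ≠ Set.univ := fun h => hint (Set.compl_univ_iff.mp h)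
    have hiw2 : (supp u.1 ∩ supp v.1)ᶜ ≠ ∅ := by
      intro h
      have := Set.compl_empty_iff.mp h
      exact hu1 (Set.eq_univ_of_univ_subset (this ▸ Set.inter_subset_left))
    set w := vtx (F := F) (supp u.1 ∩ supp v.1)ᶜ hiw1 hiw2 with hw
    have hadj1 : (comaxGraph (∀ i, F i)).Adj u w := by
      rw [adj_iff, supp_vtx]
      constructor
      · intro h
        obtain ⟨x, hx⟩ := Set.nonempty_compl.mpr hu1
        have hxin : x ∈ (supp u.1 ∩ supp v.1)ᶜ := fun hc => hx hc.1
        rw [← h] at hxin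
        exact hx hxin
      · ext x
        by_cases hx : x ∈ supp u.1 <;> simp [hx]
    have hadj2 : (comaxGraph (∀ i, F i)).Adj w v := by
      rw [adj_iff, supp_vtx]
      constructor
      · intro h
        obtain ⟨x, hx⟩ := Set.nonempty_compl.mpr hv1
        have hxin : x ∈ (supp u.1 ∩ supp v.1)ᶜ := fun hc => hx hc.2
        rw [h] at hxin
        exact hx hxin
      · ext x
        by_cases hx : x ∈ supp v.1 <;> simp [hx]
    exact ⟨.cons hadj1 (.cons hadj2 .nil), by simp⟩

lemma reachable_all (u v : {I : Ideal (∀ i, F i) // IsComaxVertex (∀ i, F i) I}) :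
    (comaxGraph (∀ i, F i)).Reachable u v :=
  ⟨(exists_walk_le_three u v).choose⟩

lemma dist_le_three (u v : {I : Ideal (∀ i, F i) // IsComaxVertex (∀ i, F i) I}) :
    (comaxGraph (∀ i, F i)).dist u v ≤ 3 := by
  obtain ⟨p, hp⟩ := exists_walk_le_three u v
  exact le_trans (SimpleGraph.dist_le p) hp

end Main

/-- For `R ≅ F_1 × ⋯ × F_n` a product of fields, `n ≥ 3`:
`∂(Γ(R)) = V(Γ(R)) \ Max(R)`. -/
theorem stmt_11 (n : ℕ) (hn : 3 ≤ n) (F : Fin n → Type*) [∀ i, Field (F i)] :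
    boundarySet (comaxGraph (∀ i, F i)) = {v : {I : Ideal (∀ i, F i) // IsComaxVertex (∀ i, F i) I} | ¬ v.1.IsMaximal} := by
  classical
  have hcard : ∀ s : Finset (Fin n), s.card < n → ∃ k, k ∉ s := by
    intro s hs
    by_contra h'
    push_neg at h'
    have hsub : (Finset.univ : Finset (Fin n)) ⊆ s := fun k _ => h' k
    have := Finset.card_le_card hsub
    rw [Finset.card_univ, Fintype.card_fin] at this
    omega
  ext u
  simp only [Set.mem_setOf_eq]
  obtain ⟨hu1, hu2⟩ := vertex_supp_ne u
  constructor
  · rintro ⟨v, hvne, hmd1, hmd2⟩ hmax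
    obtain ⟨i, hsupp⟩ := supp_of_isMax hmax
    obtain ⟨j, hj⟩ := hcard {i} (by rw [Finset.card_singleton]; omega)
    rw [Finset.mem_singleton] at hj
    by_cases hvS : supp v.1 = {i}
    · -- Case A : supp v = {i}; use neighbor with support {i, j}
      obtain ⟨k, hk⟩ := hcard {i, j} (by
        have h2 : ({i, j} : Finset (Fin n)).card ≤ 2 := by
          have := Finset.card_insert_le i ({j} : Finset (Fin n))
          rw [Finset.card_singleton] at this
          omega
        omega)
      simp only [Finset.mem_insert, Finset.mem_singleton, not_or] at hk
      have hw1 : ({i, j} : Set (Fin n)) ≠ Set.univ := by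
        intro h
        have : k ∈ ({i, j} : Set (Fin n)) := h ▸ Set.mem_univ k
        simp only [Set.mem_insert_iff, Set.mem_singleton_iff] at this
        rcases this with h' | h' <;> [exact hk.1 h'; exact hk.2 h']
      have hw2 : ({i, j} : Set (Fin n)) ≠ ∅ := by
        intro h
        have : i ∈ (∅ : Set (Fin n)) := h ▸ Set.mem_insert i {j}
        exact this
      set w := vtx (F := F) {i, j} hw1 hw2 with hwdef
      have hadj_uw : (comaxGraph (∀ i, F i)).Adj u w := by
        rw [adj_iff, supp_vtx, hsupp]
        constructor
        · intro h
          have : i ∈ ({i}ᶜ : Set (Fin n)) := h ▸ Set.mem_insert i {j}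
          simp at this
        · ext x
          by_cases hx : x = i <;> simp [hx]
      have hd_uv : (comaxGraph (∀ i, F i)).dist u v = 1 := by
        rw [SimpleGraph.dist_eq_one_iff_adj, adj_iff, hsupp, hvS]
        constructor
        · intro h
          have hmem : i ∈ ({i} : Set (Fin n)) := rfl
          rw [← h] at hmem
          simp at hmem
        · exact Set.compl_union_self _
      have hd_vw : 2 ≤ (comaxGraph (∀ i, F i)).dist v w := by
        apply two_le_dist_aux
        · apply ne_of_supp_ne
          rw [supp_vtx, hvS]
          intro h
          have : j ∈ ({i} : Set (Fin n)) := h ▸ Set.mem_insert_iff.mpr (Or.inr rfl)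
          exact hj (Set.mem_singleton_iff.mp this)
        · rw [adj_iff, supp_vtx, hvS]
          rintro ⟨-, hun⟩
          have : k ∈ ({i} : Set (Fin n)) ∪ {i, j} := hun ▸ Set.mem_univ k
          simp only [Set.mem_union, Set.mem_insert_iff, Set.mem_singleton_iff] at this
          rcases this with h' | h' | h' <;> [exact hk.1 h'; exact hk.1 h'; exact hk.2 h']
        · exact reachable_all v w
      have := hmd1 w hadj_uw
      rw [hd_uv] at this
      omega
    · -- Case B : supp v ≠ {i}; use neighbor with support {i}
      have hw1 : ({i} : Set (Fin n)) ≠ Set.univ := by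
        intro h
        have : j ∈ ({i} : Set (Fin n)) := h ▸ Set.mem_univ j
        exact hj (Set.mem_singleton_iff.mp this)
      have hw2 : ({i} : Set (Fin n)) ≠ ∅ := Set.singleton_ne_empty i
      set w := vtx (F := F) {i} hw1 hw2 with hwdef
      have hadj_uw : (comaxGraph (∀ i, F i)).Adj u w := by
        rw [adj_iff, supp_vtx, hsupp]
        constructor
        · intro h
          have hmem : i ∈ ({i} : Set (Fin n)) := rfl
          rw [← h] at hmem
          simp at hmem
        · exact Set.compl_union_self _
      have hne_vw : v ≠ w := by
        apply ne_of_supp_ne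
        rw [supp_vtx]
        exact hvS
      by_cases hiv : i ∈ supp v.1
      · -- subcase i ∈ supp v : dist u v = 1, dist v w ≥ 2
        have hd_uv : (comaxGraph (∀ i, F i)).dist u v = 1 := by
          rw [SimpleGraph.dist_eq_one_iff_adj, adj_iff, hsupp]
          constructor
          · intro h
            have : i ∈ ({i}ᶜ : Set (Fin n)) := h ▸ hiv
            simp at this
          · ext x
            by_cases hx : x = i
            · subst hx; simp [hiv]
            · simp [hx]
        have hd_vw : 2 ≤ (comaxGraph (∀ i, F i)).dist v w := by
          apply two_le_dist_aux hne_vw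
          · rw [adj_iff, supp_vtx]
            rintro ⟨-, hun⟩
            apply (vertex_supp_ne v).1
            rw [← hun]
            ext x
            simp only [Set.mem_union, Set.mem_singleton_iff]
            constructor
            · intro h; exact Or.inl h
            · rintro (h | rfl)
              · exact h
              · exact hiv
          · exact reachable_all v w
        have := hmd1 w hadj_uw
        rw [hd_uv] at this
        omega
      · -- subcase i ∉ supp v : dist u v ≤ 2, dist v w ≥ 3
        have hz1 : (supp v.1)ᶜ ≠ Set.univ := fun h => (vertex_supp_ne v).2 (Set.compl_univ_iff.mp h)
        have hz2 : (supp v.1)ᶜ ≠ ∅ := fun h => (vertex_supp_ne v).1 (Set.compl_empty_iff.mp h)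
        set z := vtx (F := F) (supp v.1)ᶜ hz1 hz2 with hzdef
        have hadj_uz : (comaxGraph (∀ i, F i)).Adj u z := by
          rw [adj_iff, supp_vtx, hsupp]
          constructor
          · intro h
            exact hvS (compl_injective h.symm)
          · ext x
            by_cases hx : x = i
            · subst hx; simp [hiv]
            · simp [hx]
        have hadj_zv : (comaxGraph (∀ i, F i)).Adj z v := by
          rw [adj_iff, supp_vtx]
          exact ⟨(ne_compl_self (vertex_supp_ne v).2).symm, Set.compl_union_self _⟩
        have hd_uv : (comaxGraph (∀ i, F i)).dist u v ≤ 2 := by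
          have := SimpleGraph.dist_le (SimpleGraph.Walk.cons hadj_uz
            (SimpleGraph.Walk.cons hadj_zv SimpleGraph.Walk.nil))
          simpa using this
        have hd_vw : 3 ≤ (comaxGraph (∀ i, F i)).dist v w := by
          apply three_le_dist_aux hne_vw
          · rw [adj_iff, supp_vtx]
            rintro ⟨-, hun⟩
            apply hvne
            apply Subtype.ext
            apply (eq_iff_supp _ _).mpr
            rw [hsupp]
            ext x
            simp only [Set.mem_compl_iff, Set.mem_singleton_iff]
            constructor
            · intro hx
              rintro rfl
              exact hiv hx
            · intro hx
              have : x ∈ supp v.1 ∪ ({i} : Set (Fin n)) := hun ▸ Set.mem_univ x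
              rcases this with h' | h'
              · exact h'
              · exact absurd (Set.mem_singleton_iff.mp h') hx
          · intro z' hz1' hz2'
            rw [adj_iff] at hz1' hz2'
            rw [supp_vtx] at hz2'
            apply (vertex_supp_ne z').1
            rw [Set.eq_univ_iff_forall]
            intro x
            by_cases hx : x = i
            · subst hx
              have : x ∈ supp v.1 ∪ supp z'.1 := hz1'.2 ▸ Set.mem_univ x
              rcases this with h' | h'
              · exact absurd h' hiv
              · exact h'
            · have : x ∈ supp z'.1 ∪ ({i} : Set (Fin n)) := hz2'.2 ▸ Set.mem_univ x
              rcases this with h' | h'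
              · exact h'
              · exact absurd (Set.mem_singleton_iff.mp h') hx
          · exact reachable_all v w
        have := hmd1 w hadj_uw
        omega
  · -- converse : non-maximal vertices are boundary vertices
    intro hnm
    obtain ⟨i, j, hij, hi, hj⟩ := not_isMax_missing_two hu1 hnm
    have hv1 : ({i} : Set (Fin n)) ≠ Set.univ := by
      intro h
      have : j ∈ ({i} : Set (Fin n)) := h ▸ Set.mem_univ j
      exact hij (Set.mem_singleton_iff.mp this).symm
    have hv2 : ({i} : Set (Fin n)) ≠ ∅ := Set.singleton_ne_empty i
    set v := vtx (F := F) {i} hv1 hv2 with hvdef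
    have hne_vu : v ≠ u := by
      apply ne_of_supp_ne
      rw [supp_vtx]
      intro h
      exact hi (h ▸ rfl)
    have h3 : 3 ≤ (comaxGraph (∀ i, F i)).dist u v := by
      apply three_le_dist_aux hne_vu.symm
      · rw [adj_iff, supp_vtx]
        rintro ⟨-, hun⟩
        have : j ∈ supp u.1 ∪ ({i} : Set (Fin n)) := hun ▸ Set.mem_univ j
        rcases this with h' | h'
        · exact hj h'
        · exact hij (Set.mem_singleton_iff.mp h').symm
      · intro z' hz1' hz2'
        rw [adj_iff] at hz1' hz2'
        rw [supp_vtx] at hz2'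
        apply (vertex_supp_ne z').1
        rw [Set.eq_univ_iff_forall]
        intro x
        by_cases hx : x = i
        · subst hx
          have : x ∈ supp u.1 ∪ supp z'.1 := hz1'.2 ▸ Set.mem_univ x
          rcases this with h' | h'
          · exact absurd h' hi
          · exact h'
        · have : x ∈ supp z'.1 ∪ ({i} : Set (Fin n)) := hz2'.2 ▸ Set.mem_univ x
          rcases this with h' | h'
          · exact h'
          · exact absurd (Set.mem_singleton_iff.mp h') hx
      · exact reachable_all u v
    refine ⟨v, hne_vu, ?_, ?_⟩
    · intro w hw
      exact le_trans (dist_le_three v w) h3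
    · intro w hw
      rw [SimpleGraph.dist_comm (u := v) (v := u)]
      exact le_trans (dist_le_three u w) h3

end CoMax
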